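/- arXiv:math/0508118 — 5 statements merged into one kernel-verified Lean document; each statement's English description precedes it below -/
import Mathlib

section
/- Suppose S, T : ℝⁿ → ℝ are smooth functions vanishing to second order at the origin (S(0)=0, S'(0)=0, S''(0)=0 and likewise for T), B is a symmetric n×n matrix, and T'(Q) = S'(Q - B T'(Q)) for all Q near 0. Then the third-order Taylor coefficients of T at 0 equal the third-order Taylor coefficients of S at 0. -/
open Matrix

/-- Matrix–vector multiplication on `EuclideanSpace ℝ (Fin n)`. -/
noncomputable def mv {n : ℕ} (B : Matrix (Fin n) (Fin n) ℝ)
    (x : EuclideanSpace ℝ (Fin n)) : EuclideanSpace ℝ (Fin n) :=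
  (WithLp.equiv 2 (Fin n → ℝ)).symm (B.mulVec (WithLp.equiv 2 (Fin n → ℝ) x))

lemma iteratedFDeriv_three_apply {E F : Type*} [NormedAddCommGroup E] [NormedSpace ℝ E]
    [NormedAddCommGroup F] [NormedSpace ℝ F] (f : E → F) (z : E) (m : Fin 3 → E) :
    iteratedFDeriv ℝ 3 f z m = fderiv ℝ (fderiv ℝ (fderiv ℝ f)) z (m 0) (m 1) (m 2) := by
  have h1 := iteratedFDeriv_succ_apply_right (𝕜 := ℝ) (n := 2) (f := f) (x := z) m
  rw [iteratedFDeriv_two_apply] at h1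
  exact h1

lemma core_second_deriv_eq {E V : Type*} [NormedAddCommGroup E] [NormedSpace ℝ E]
    [NormedAddCommGroup V] [NormedSpace ℝ V]
    (f g : E → V) (K : V →L[ℝ] E)
    (hf : ContDiff ℝ (⊤ : ℕ∞) f) (hg : ContDiff ℝ (⊤ : ℕ∞) g)
    (hg0 : g 0 = 0)
    (hf1 : fderiv ℝ f 0 = 0) (hg1 : fderiv ℝ g 0 = 0)
    (h : ∀ᶠ x in nhds (0:E), g x = f (x - K (g x))) :
    fderiv ℝ (fderiv ℝ g) 0 = fderiv ℝ (fderiv ℝ f) 0 := by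
  set φ : E → E := fun x => x - K (g x) with hφdef
  have hφ : ContDiff ℝ (⊤ : ℕ∞) φ := contDiff_id.sub (K.contDiff.comp hg)
  have hφ0 : φ 0 = 0 := by simp [hφdef, hg0]
  have hφ1 : fderiv ℝ φ 0 = ContinuousLinearMap.id ℝ E := by
    have h1 : HasFDerivAt g (0 : E →L[ℝ] V) 0 := by
      have := (hg.differentiable (by simp) 0).hasFDerivAt
      rwa [hg1] at this
    have h2 : HasFDerivAt (fun x => K (g x)) (K.comp 0) 0 := K.hasFDerivAt.comp 0 h1
    have h3 : HasFDerivAt φ (ContinuousLinearMap.id ℝ E - K.comp 0) 0 :=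
      (hasFDerivAt_id 0).sub h2
    simpa using h3.fderiv
  have hev : fderiv ℝ g =ᶠ[nhds (0 : E)]
      fun x => (fderiv ℝ f (φ x)).comp (fderiv ℝ φ x) := by
    filter_upwards [h.eventually_nhds] with x hx
    have hxe : g =ᶠ[nhds x] f ∘ φ := hx.mono fun y hy => hy
    rw [hxe.fderiv_eq]
    exact fderiv_comp x (hf.differentiable (by simp) (φ x)) (hφ.differentiable (by simp) x)
  rw [hev.fderiv_eq]
  have hc : DifferentiableAt ℝ (fun x => fderiv ℝ f (φ x)) 0 :=
    ((hf.fderiv_right (m := (⊤ : ℕ∞)) (by simp)).differentiable (by simp) (φ 0)).comp 0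
      (hφ.differentiable (by simp) 0)
  have hd : DifferentiableAt ℝ (fun x => fderiv ℝ φ x) 0 :=
    (hφ.fderiv_right (m := (⊤ : ℕ∞)) (by simp)).differentiable (by simp) 0
  have hc0 : fderiv ℝ (fun x => fderiv ℝ f (φ x)) 0 = fderiv ℝ (fderiv ℝ f) 0 := by
    rw [show (fun x => fderiv ℝ f (φ x)) = fderiv ℝ f ∘ φ from rfl,
      fderiv_comp 0 (by rw [hφ0]; exact (hf.fderiv_right (m := (⊤ : ℕ∞)) (by simp)).differentiable (by simp) 0)
        (hφ.differentiable (by simp) 0), hφ0, hφ1]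
    exact ContinuousLinearMap.comp_id _
  rw [fderiv_clm_comp hc hd, hφ0, hf1, hφ1, hc0]
  have e1 : (ContinuousLinearMap.compL ℝ E E V) 0 = 0 := map_zero _
  rw [e1, ContinuousLinearMap.zero_comp, zero_add]
  ext a b
  rfl

/-- If `S, T` are smooth functions vanishing to second order at `0`, `B` is a
symmetric matrix, and `T'(Q) = S'(Q - B T'(Q))` near `0`, then the third-order
Taylor coefficients of `T` and `S` at `0` agree. -/
theorem third_order_terms_eq_of_shear (n : ℕ)
    (S T : EuclideanSpace ℝ (Fin n) → ℝ)
    (hS : ContDiff ℝ (⊤ : ℕ∞) S) (hT : ContDiff ℝ (⊤ : ℕ∞) T)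
    (hS0 : S 0 = 0) (hS1 : fderiv ℝ S 0 = 0) (hS2 : iteratedFDeriv ℝ 2 S 0 = 0)
    (hT0 : T 0 = 0) (hT1 : fderiv ℝ T 0 = 0) (hT2 : iteratedFDeriv ℝ 2 T 0 = 0)
    (B : Matrix (Fin n) (Fin n) ℝ) (hB : Bᵀ = B)
    (h : ∀ᶠ Q in nhds (0 : EuclideanSpace ℝ (Fin n)),
      gradient T Q = gradient S (Q - mv B (gradient T Q))) :
    iteratedFDeriv ℝ 3 T 0 = iteratedFDeriv ℝ 3 S 0 := by
  let mvL : EuclideanSpace ℝ (Fin n) →ₗ[ℝ] EuclideanSpace ℝ (Fin n) :=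
    { toFun := mv B
      map_add' := fun x y => by
        simp [mv, Matrix.mulVec_add]
      map_smul' := fun c x => by
        simp [mv, Matrix.mulVec_smul] }
  let e := InnerProductSpace.toDual ℝ (EuclideanSpace ℝ (Fin n))
  let KL : StrongDual ℝ (EuclideanSpace ℝ (Fin n)) →ₗ[ℝ] EuclideanSpace ℝ (Fin n) :=
    { toFun := fun ξ => mvL (e.symm ξ)
      map_add' := fun ξ η => by simp
      map_smul' := fun c ξ => by simp }
  let K : StrongDual ℝ (EuclideanSpace ℝ (Fin n)) →L[ℝ] EuclideanSpace ℝ (Fin n) :=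
    KL.toContinuousLinearMap
  have h' : ∀ᶠ Q in nhds (0 : EuclideanSpace ℝ (Fin n)),
      fderiv ℝ T Q = fderiv ℝ S (Q - K (fderiv ℝ T Q)) := by
    filter_upwards [h] with Q hQ
    have hK : K (fderiv ℝ T Q) = mv B (gradient T Q) := rfl
    rw [hK]
    unfold gradient at hQ
    exact (InnerProductSpace.toDual ℝ (EuclideanSpace ℝ (Fin n))).symm.injective hQ
  have hT2' : fderiv ℝ (fderiv ℝ T) 0 = 0 := by
    ext a b
    have := iteratedFDeriv_two_apply (𝕜 := ℝ) T 0 ![a, b]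
    rw [hT2] at this
    simpa using this.symm
  have hS2' : fderiv ℝ (fderiv ℝ S) 0 = 0 := by
    ext a b
    have := iteratedFDeriv_two_apply (𝕜 := ℝ) S 0 ![a, b]
    rw [hS2] at this
    simpa using this.symm
  have key := core_second_deriv_eq (fderiv ℝ S) (fderiv ℝ T) K
    (hS.fderiv_right (by simp)) (hT.fderiv_right (by simp)) hT1 hS2' hT2' h'
  ext m
  rw [iteratedFDeriv_three_apply, iteratedFDeriv_three_apply, key]
end

section
/- The isotropy group in GL(2,ℝ) of the binary cubic form x²y/2 − xy²/2 is the group of order 6 consisting of the matrices {I, [[0,−1],[1,−1]], [[0,−1],[−1,0]], [[−1,1],[0,1]], [[1,0],[1,−1]], [[−1,1],[−1,0]]}, which is isomorphic to the symmetric group on 3 letters. -/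
/-!
With `ℓ₀ = x`, `ℓ₁ = -y`, `ℓ₂ = y - x` the form is `ℓ₀ ℓ₁ ℓ₂ / 2`, and `ℓ₀ + ℓ₁ + ℓ₂ = 0`.
Hence every permutation of the three linear factors is induced by a linear map preserving the
form, which embeds `Σ₃` into the isotropy group. Conversely, an isotropy `g` sends `e₁` and `e₂`
into the zero set of the form, the lines `x = 0`, `y = 0`, `x = y`. In each of the six
admissible placements the `x²y` and `xy²` coefficients of the transformed form leave a system
`p²q = ±1`, `pq² = ±1`, which has a single real solution because real cube roots are unique.
So the isotropy group has at most the six listed elements, and the copy of `Σ₃` fills them.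
-/

open Matrix

/-- The six matrices forming the isotropy group of `x²y/2 − xy²/2`. -/
def sigma3Set : Set (Matrix (Fin 2) (Fin 2) ℝ) :=
  {1, !![0, -1; 1, -1], !![0, -1; -1, 0], !![-1, 1; 0, 1], !![1, 0; 1, -1],
    !![-1, 1; -1, 0]}

section Field

variable {K : Type*} [Field K]

def cubicForm (v : Fin 2 → K) : K :=
  v 0 ^ 2 * v 1 / 2 - v 0 * v 1 ^ 2 / 2

def IsIsotropic (g : Matrix (Fin 2) (Fin 2) K) : Prop :=
  ∀ v, cubicForm (g *ᵥ v) = cubicForm v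

def linearFactor : Fin 3 → Fin 2 → K :=
  ![![1, 0], ![0, -1], ![-1, 1]]

lemma linearFactor_zero_dotProduct (w : Fin 2 → K) : linearFactor 0 ⬝ᵥ w = w 0 := by
  simp [linearFactor, dotProduct, Fin.sum_univ_two]

lemma linearFactor_one_dotProduct (w : Fin 2 → K) : linearFactor 1 ⬝ᵥ w = -w 1 := by
  simp [linearFactor, dotProduct, Fin.sum_univ_two]

lemma linearFactor_two_dotProduct (w : Fin 2 → K) : linearFactor 2 ⬝ᵥ w = w 1 - w 0 := by
  simp [linearFactor, dotProduct, Fin.sum_univ_two, neg_add_eq_sub]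

lemma sum_linearFactor_dotProduct (v : Fin 2 → K) : ∑ i, linearFactor i ⬝ᵥ v = 0 := by
  simp only [Fin.sum_univ_three, linearFactor_zero_dotProduct, linearFactor_one_dotProduct,
    linearFactor_two_dotProduct]
  ring

lemma cubicForm_eq_prod_linearFactor_dotProduct (v : Fin 2 → K) :
    cubicForm v = (∏ i, linearFactor i ⬝ᵥ v) / 2 := by
  simp only [cubicForm, Fin.prod_univ_three, linearFactor_zero_dotProduct,
    linearFactor_one_dotProduct, linearFactor_two_dotProduct]
  ring

lemma linearFactor_injective : Function.Injective (linearFactor : Fin 3 → Fin 2 → K) := by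
  intro i j h
  have h0 := congrFun h 0
  have h1 := congrFun h 1
  fin_cases i <;> fin_cases j <;> simp_all [linearFactor]

lemma eq_of_forall_linearFactor_dotProduct_eq {w w' : Fin 2 → K}
    (h : ∀ i, linearFactor i ⬝ᵥ w = linearFactor i ⬝ᵥ w') : w = w' := by
  have h0 := h 0
  have h1 := h 1
  simp only [linearFactor_zero_dotProduct, linearFactor_one_dotProduct, neg_inj] at h0 h1
  ext i
  fin_cases i <;> assumption

/-- Rows `ℓ_{σ⁻¹ 0}` and `-ℓ_{σ⁻¹ 1}` give `ℓ_i ∘ sigma3Rep σ = ℓ_{σ⁻¹ i}` for `i = 0, 1`, and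
then for `i = 2` because both families sum to zero. -/
def sigma3Rep (σ : Equiv.Perm (Fin 3)) : Matrix (Fin 2) (Fin 2) K :=
  Matrix.of ![linearFactor (σ⁻¹ 0), -linearFactor (σ⁻¹ 1)]

lemma linearFactor_dotProduct_sigma3Rep_mulVec (σ : Equiv.Perm (Fin 3)) (v : Fin 2 → K)
    (i : Fin 3) : linearFactor i ⬝ᵥ (sigma3Rep σ *ᵥ v) = linearFactor (σ⁻¹ i) ⬝ᵥ v := by
  have h0 : linearFactor 0 ⬝ᵥ (sigma3Rep σ *ᵥ v) = linearFactor (σ⁻¹ 0) ⬝ᵥ v :=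
    linearFactor_zero_dotProduct _
  have h1 : linearFactor 1 ⬝ᵥ (sigma3Rep σ *ᵥ v) = linearFactor (σ⁻¹ 1) ⬝ᵥ v := by
    rw [linearFactor_one_dotProduct, neg_eq_iff_eq_neg, ← neg_dotProduct]
    rfl
  have hsum := sum_linearFactor_dotProduct (sigma3Rep σ *ᵥ v)
  have hsum' : ∑ i, linearFactor (σ⁻¹ i) ⬝ᵥ v = 0 :=
    (Equiv.sum_comp σ⁻¹ _).trans (sum_linearFactor_dotProduct v)
  rw [Fin.sum_univ_three] at hsum hsum'
  match i with
  | 0 => exact h0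
  | 1 => exact h1
  | 2 => linear_combination hsum - hsum' - h0 - h1

lemma sigma3Rep_mul (σ τ : Equiv.Perm (Fin 3)) :
    (sigma3Rep (σ * τ) : Matrix (Fin 2) (Fin 2) K) = sigma3Rep σ * sigma3Rep τ := by
  refine ext_iff_mulVec.mpr fun v => ?_
  rw [← mulVec_mulVec]
  refine eq_of_forall_linearFactor_dotProduct_eq fun i => ?_
  simp only [linearFactor_dotProduct_sigma3Rep_mulVec, _root_.mul_inv_rev, Equiv.Perm.mul_apply]

lemma sigma3Rep_injective :
    Function.Injective (sigma3Rep : Equiv.Perm (Fin 3) → Matrix (Fin 2) (Fin 2) K) := by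
  intro σ τ h
  refine inv_injective (Equiv.ext fun i => linearFactor_injective (K := K) (funext fun j => ?_))
  have := congrArg (fun g => linearFactor i ⬝ᵥ (g *ᵥ Pi.single j 1)) h
  simpa only [linearFactor_dotProduct_sigma3Rep_mulVec, dotProduct_single, mul_one] using this

lemma isIsotropic_sigma3Rep (σ : Equiv.Perm (Fin 3)) :
    IsIsotropic (sigma3Rep σ : Matrix (Fin 2) (Fin 2) K) := by
  intro v
  simp only [cubicForm_eq_prod_linearFactor_dotProduct, linearFactor_dotProduct_sigma3Rep_mulVec]
  rw [Equiv.prod_comp σ⁻¹ (fun i => linearFactor i ⬝ᵥ v)]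

end Field

lemma mul_mul_sub_eq_zero_iff {R : Type*} [Ring R] [NoZeroDivisors R] {a c : R} :
    a * c * (a - c) = 0 ↔ a = 0 ∨ c = 0 ∨ a = c := by
  simp [sub_eq_zero, or_assoc]

lemma eq_of_sq_mul_eq_of_mul_sq_eq {R : Type*} [CommRing R] [LinearOrder R] [IsStrictOrderedRing R]
    {x y s t : R} (hx : x ^ 2 * y = s) (hy : x * y ^ 2 = t) (hs : s ^ 2 = 1) (ht : t ^ 2 = 1) :
    x = t ∧ y = s := by
  have hxy : x * y = s * t := by
    rw [← Odd.pow_inj (R := R) (n := 3) (by decide)]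
    linear_combination x * y ^ 2 * hx + s * hy - s * t * hs - s ^ 3 * t * ht
  constructor
  · linear_combination s * t * (hx - x * hxy) - x * hs - x * s ^ 2 * ht + t * hs
  · linear_combination s * t * (hy - y * hxy) - y * ht - y * t ^ 2 * hs + s * ht

/-- The `x³`, `y³`, `x²y` and `xy²` coefficients of `2 * cubicForm (!![a, b; c, d] *ᵥ v)`. -/
lemma IsIsotropic.coeff_eqs {a b c d : ℝ} (h : IsIsotropic !![a, b; c, d]) :
    a * c * (a - c) = 0 ∧ b * d * (b - d) = 0 ∧
      a ^ 2 * d + 2 * a * b * c - 2 * a * c * d - b * c ^ 2 = 1 ∧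
      2 * a * b * d + b ^ 2 * c - a * d ^ 2 - 2 * b * c * d = -1 := by
  have h₁ : a ^ 2 * c / 2 - a * c ^ 2 / 2 = 0 := by
    simpa [cubicForm, mulVec, dotProduct] using h ![1, 0]
  have h₂ : b ^ 2 * d / 2 - b * d ^ 2 / 2 = 0 := by
    simpa [cubicForm, mulVec, dotProduct] using h ![0, 1]
  have h₃ : (a + b) ^ 2 * (c + d) / 2 - (a + b) * (c + d) ^ 2 / 2 = 0 := by
    simpa [cubicForm, mulVec, dotProduct] using h ![1, 1]
  have h₄ : (a - b) ^ 2 * (c - d) / 2 - (a - b) * (c - d) ^ 2 / 2 = -1 := by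
    have h' := h ![1, -1]
    simp only [cubicForm, mulVec, dotProduct, of_apply, cons_val', cons_val_fin_one, cons_val_zero,
      cons_val_one, Fin.sum_univ_two, mul_one, mul_neg, one_pow, even_two, Even.neg_pow] at h'
    linear_combination h'
  exact ⟨by linear_combination 2 * h₁, by linear_combination 2 * h₂,
    by linear_combination h₃ - h₄ - 2 * h₂, by linear_combination h₃ + h₄ - 2 * h₁⟩

lemma mem_sigma3Set_of_isIsotropic {g : Matrix (Fin 2) (Fin 2) ℝ} (hg : IsIsotropic g) :
    g ∈ sigma3Set := by
  obtain ⟨a, b, c, d, rfl⟩ : ∃ a b c d, g = !![a, b; c, d] := ⟨_, _, _, _, eta_fin_two g⟩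
  obtain ⟨hac, hbd, hA, hB⟩ := hg.coeff_eqs
  rcases mul_mul_sub_eq_zero_iff.mp hac with rfl | rfl | rfl <;>
    rcases mul_mul_sub_eq_zero_iff.mp hbd with rfl | rfl | rfl
  · linarith
  · obtain ⟨rfl, rfl⟩ := eq_of_sq_mul_eq_of_mul_sq_eq
      (by linear_combination hB : b ^ 2 * c = -1) (by linear_combination -hA : b * c ^ 2 = -1)
      (by norm_num) (by norm_num)
    simp [sigma3Set]
  · obtain ⟨rfl, rfl⟩ := eq_of_sq_mul_eq_of_mul_sq_eq
      (by linear_combination -hB : b ^ 2 * c = 1) (by linear_combination -hA : b * c ^ 2 = -1)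
      (by norm_num) (by norm_num)
    simp [sigma3Set]
  · obtain ⟨rfl, rfl⟩ := eq_of_sq_mul_eq_of_mul_sq_eq
      (by linear_combination hA : a ^ 2 * d = 1) (by linear_combination -hB : a * d ^ 2 = 1)
      (by norm_num) (by norm_num)
    simp [sigma3Set, one_fin_two]
  · linarith
  · obtain ⟨rfl, rfl⟩ := eq_of_sq_mul_eq_of_mul_sq_eq
      (by linear_combination hA : a ^ 2 * b = 1) (by linear_combination hB : a * b ^ 2 = -1)
      (by norm_num) (by norm_num)
    simp [sigma3Set]
  · obtain ⟨rfl, rfl⟩ := eq_of_sq_mul_eq_of_mul_sq_eq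
      (by linear_combination -hA : a ^ 2 * d = -1) (by linear_combination -hB : a * d ^ 2 = 1)
      (by norm_num) (by norm_num)
    simp [sigma3Set]
  · obtain ⟨rfl, rfl⟩ := eq_of_sq_mul_eq_of_mul_sq_eq
      (by linear_combination hA : a ^ 2 * b = 1) (by linear_combination hB : a * b ^ 2 = -1)
      (by norm_num) (by norm_num)
    simp [sigma3Set]
  · linarith

lemma ncard_sigma3Set_le : sigma3Set.ncard ≤ 6 := by
  classical
  simp only [sigma3Set, ← Finset.coe_singleton, ← Finset.coe_insert, Set.ncard_coe_finset]
  exact Finset.card_le_six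

lemma range_sigma3Rep : Set.range (sigma3Rep (K := ℝ)) = sigma3Set := by
  refine Set.eq_of_subset_of_ncard_le ?_ ?_ (by simp [sigma3Set])
  · rintro _ ⟨σ, rfl⟩
    exact mem_sigma3Set_of_isIsotropic (isIsotropic_sigma3Rep σ)
  · rw [Set.ncard_range_of_injective sigma3Rep_injective, Nat.card_perm, Nat.card_fin]
    exact ncard_sigma3Set_le

/-- The isotropy group in `GL(2,ℝ)` of the binary cubic form `x²y/2 − xy²/2`
is the group of order 6 consisting of the six listed matrices, and it is
isomorphic to the symmetric group on 3 letters: there is an injective map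
`ρ : Σ₃ → GL(2,ℝ)` which is multiplicative and has image exactly this set. -/
theorem isotropy_three_distinct_factors :
    (∀ g : Matrix (Fin 2) (Fin 2) ℝ, IsUnit g.det →
      ((∀ v : Fin 2 → ℝ,
          (g.mulVec v 0) ^ 2 * (g.mulVec v 1) / 2 -
              (g.mulVec v 0) * (g.mulVec v 1) ^ 2 / 2 =
            (v 0) ^ 2 * v 1 / 2 - v 0 * (v 1) ^ 2 / 2) ↔ g ∈ sigma3Set)) ∧
    ∃ ρ : Equiv.Perm (Fin 3) → Matrix (Fin 2) (Fin 2) ℝ,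
      Function.Injective ρ ∧ (∀ σ τ, ρ (σ * τ) = ρ σ * ρ τ) ∧
      Set.range ρ = sigma3Set := by
  refine ⟨fun g _ => ⟨mem_sigma3Set_of_isIsotropic, fun hg => ?_⟩,
    sigma3Rep, sigma3Rep_injective, sigma3Rep_mul, range_sigma3Rep⟩
  obtain ⟨σ, rfl⟩ := range_sigma3Rep.symm ▸ hg
  exact isIsotropic_sigma3Rep σ
end

section
/- The isotropy group of the ternary cubic form xyz in GL(3,ℝ) consists exactly of products P·D where P is a 3×3 permutation matrix and D = diag(a, b, (ab)⁻¹) with a,b ≠ 0. -/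
/-!
On the line `t • e j + e k` the form `xyz` vanishes, so the three rows of `g`, read as affine
functions of `t`, have identically vanishing product; hence some row of `g` is zero in columns `j`
and `k`. Doing this for the three pairs of columns and using that `g` is invertible, every row of
`g` is supported on a single column, distinct rows on distinct columns: `g` is a permutation
matrix times a diagonal one, whose entries have product `1` (evaluate at `(1, 1, 1)`).
-/

open Matrix Polynomial

theorem exists_affine_eq_zero_of_forall_prod_eq_zero {R ι : Type*} [CommRing R] [IsDomain R]
    [Infinite R] [Fintype ι] (a b : ι → R) (h : ∀ t, ∏ i, (a i * t + b i) = 0) :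
    ∃ i, a i = 0 ∧ b i = 0 := by
  have hp : ∏ i, (C (a i) * X + C (b i)) = 0 :=
    Polynomial.funext fun t => by simpa [eval_prod] using h t
  obtain ⟨i, -, hi⟩ := Finset.prod_eq_zero_iff.mp hp
  exact ⟨i, by simpa using congrArg (coeff · 1) hi, by simpa using congrArg (coeff · 0) hi⟩

section MonomialMatrix

variable {R n : Type*} [CommRing R] [Fintype n] [DecidableEq n]

theorem mulVec_permMatrix_mul_diagonal (σ : Equiv.Perm n) (d v : n → R) :
    (σ.permMatrix R * diagonal d) *ᵥ v = fun i => d (σ i) * v (σ i) := by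
  rw [← mulVec_mulVec, permMatrix_mulVec]
  ext i
  simp [mulVec_diagonal]

theorem prod_mulVec_permMatrix_mul_diagonal (σ : Equiv.Perm n) (d v : n → R) :
    ∏ i, ((σ.permMatrix R * diagonal d) *ᵥ v) i = (∏ i, d i) * ∏ i, v i := by
  simp only [mulVec_permMatrix_mul_diagonal, Finset.prod_mul_distrib,
    Equiv.prod_comp σ d, Equiv.prod_comp σ v]

theorem eq_permMatrix_mul_diagonal_of_apply_eq_zero {g : Matrix n n R} (σ : Equiv.Perm n)
    (h : ∀ i j, σ i ≠ j → g i j = 0) :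
    g = σ.permMatrix R * diagonal fun j => g (σ.symm j) j := by
  ext i j
  by_cases hij : σ i = j
  · subst hij
    simp [mul_diagonal, Equiv.Perm.permMatrix, PEquiv.toMatrix_apply]
  · simp [mul_diagonal, Equiv.Perm.permMatrix, PEquiv.toMatrix_apply, hij, h i j hij]

theorem injective_of_apply_eq_zero_of_ne {g : Matrix n n R} (hg : g.det ≠ 0) {r : n → n}
    (hr : ∀ l j, j ≠ l → g (r l) j = 0) : Function.Injective r := by
  intro l l' hll'
  by_contra hne
  refine hg (det_eq_zero_of_row_eq_zero (r l) fun j => ?_)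
  by_cases hj : j = l
  · subst hj
    rw [hll']
    exact hr l' j hne
  · exact hr l j hj

end MonomialMatrix

theorem exists_row_eq_zero_off_of_prod_mulVec_eq {R : Type*} [CommRing R] [IsDomain R]
    [Infinite R] {g : Matrix (Fin 3) (Fin 3) R} (h : ∀ v, ∏ i, (g *ᵥ v) i = ∏ i, v i)
    (l : Fin 3) : ∃ i, ∀ j, j ≠ l → g i j = 0 := by
  have hcases : ∀ j : Fin 3, j ≠ l → j = l + 1 ∨ j = l + 2 := by revert l; decide
  obtain ⟨i, hi1, hi2⟩ := exists_affine_eq_zero_of_forall_prod_eq_zero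
    (fun i => g i (l + 1)) (fun i => g i (l + 2)) fun t => by
      have hv := h (Pi.single (l + 1) t + Pi.single (l + 2) 1)
      have hvl : (Pi.single (l + 1) t + Pi.single (l + 2) 1 : Fin 3 → R) l = 0 := by simp
      rw [Finset.prod_eq_zero (Finset.mem_univ l) hvl] at hv
      simpa [mulVec_add, mulVec_single, mul_comm] using hv
  exact ⟨i, fun j hj => (hcases j hj).elim (· ▸ hi1) (· ▸ hi2)⟩

theorem eq_vecCons_inv_of_mul_mul_eq_one {K : Type*} [Field K] {d : Fin 3 → K}
    (hd : d 0 * d 1 * d 2 = 1) : d = ![d 0, d 1, (d 0 * d 1)⁻¹] := by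
  ext i
  fin_cases i
  · rfl
  · rfl
  · exact eq_inv_of_mul_eq_one_right hd

/-- The isotropy group of the ternary cubic form `xyz` in `GL(3,ℝ)` consists
exactly of products `P · diag(a, b, (ab)⁻¹)` with `P` a permutation matrix and
`a, b ≠ 0`. -/
theorem isotropy_xyz (g : Matrix (Fin 3) (Fin 3) ℝ) (hg : IsUnit g.det) :
    (∀ v : Fin 3 → ℝ, g.mulVec v 0 * g.mulVec v 1 * g.mulVec v 2 = v 0 * v 1 * v 2) ↔
      ∃ (σ : Equiv.Perm (Fin 3)) (a b : ℝ), a ≠ 0 ∧ b ≠ 0 ∧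
        g = (σ.permMatrix ℝ) * Matrix.diagonal ![a, b, (a * b)⁻¹] := by
  constructor
  · intro h
    have hprod : ∀ v, ∏ i, (g *ᵥ v) i = ∏ i, v i := by simpa [Fin.prod_univ_three] using h
    choose r hr using exists_row_eq_zero_off_of_prod_mulVec_eq hprod
    have hr_bij := Finite.injective_iff_bijective.mp
      (injective_of_apply_eq_zero_of_ne hg.ne_zero hr)
    set σ := (Equiv.ofBijective r hr_bij).symm
    have hgσ := eq_permMatrix_mul_diagonal_of_apply_eq_zero (g := g) σ fun i j hij =>
      (Equiv.ofBijective_apply_symm_apply r hr_bij i) ▸ hr _ j (Ne.symm hij)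
    set d := fun j => g (σ.symm j) j
    have hd : d 0 * d 1 * d 2 = 1 := by
      have h1 := hprod 1
      rw [hgσ, prod_mulVec_permMatrix_mul_diagonal] at h1
      simpa [Fin.prod_univ_three] using h1
    refine ⟨σ, d 0, d 1, left_ne_zero_of_mul (left_ne_zero_of_mul_eq_one hd),
      right_ne_zero_of_mul (left_ne_zero_of_mul_eq_one hd), ?_⟩
    rw [← eq_vecCons_inv_of_mul_mul_eq_one hd]
    exact hgσ
  · rintro ⟨σ, a, b, ha, hb, rfl⟩ v
    have hd : ∏ i, ![a, b, (a * b)⁻¹] i = 1 := by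
      rw [Fin.prod_univ_three]
      exact mul_inv_cancel₀ (mul_ne_zero ha hb)
    have hprod := prod_mulVec_permMatrix_mul_diagonal σ ![a, b, (a * b)⁻¹] v
    rw [hd, one_mul] at hprod
    simpa only [Fin.prod_univ_three] using hprod
end

section
/- Let V be a symplectic vector space, J : V* → V defined by Ω(Jξ,w)=ξ(w), and suppose symmetric maps A₁,…,Aₙ : V → V* satisfy JAⱼJAₖ = 0 for all j ≠ k. Let A = A₁ + ⋯ + Aₙ be invertible, ξ ∈ V*, and ξⱼ = Aⱼ A⁻¹ ξ. Then the (n+1) matrices consisting of the central element E₃₃ and the block matrices Mⱼ with upper-left block JAⱼ, upper-middle block Jξⱼ, and zeros elsewhere, pairwise commute, and M₁ + ⋯ + Mₙ has upper-left block JA and upper-middle block Jξ. -/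
open Matrix

/-- The `(d+2)×(d+2)` block matrix `[[T, w, 0],[0,0,0],[0,0,0]]` with
upper-left `d×d` block `T` and upper-middle column `w`. -/
def blockM {d : ℕ} (T : Matrix (Fin d) (Fin d) ℝ) (w : Fin d → ℝ) :
    Matrix (Fin d ⊕ (Unit ⊕ Unit)) (Fin d ⊕ (Unit ⊕ Unit)) ℝ :=
  Matrix.of fun r s =>
    match r, s with
    | Sum.inl i, Sum.inl i' => T i i'
    | Sum.inl i, Sum.inr (Sum.inl _) => w i
    | _, _ => 0

/-- The central element `E₃₃`, with a single `1` in the bottom-right corner. -/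
def E33 (d : ℕ) : Matrix (Fin d ⊕ (Unit ⊕ Unit)) (Fin d ⊕ (Unit ⊕ Unit)) ℝ :=
  Matrix.of fun r s =>
    match r, s with
    | Sum.inr (Sum.inr _), Sum.inr (Sum.inr _) => 1
    | _, _ => 0

lemma blockM_mul {d : ℕ} (T T' : Matrix (Fin d) (Fin d) ℝ) (w w' : Fin d → ℝ) :
    blockM T w * blockM T' w' = blockM (T * T') (T.mulVec w') := by
  ext r s
  cases r with
  | inl i => cases s with
    | inl i' => simp [blockM, Matrix.mul_apply, Fintype.sum_sum_type]
    | inr u => cases u with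
      | inl u => simp [blockM, Matrix.mul_apply, Fintype.sum_sum_type, Matrix.mulVec, dotProduct]
      | inr u => simp [blockM, Matrix.mul_apply, Fintype.sum_sum_type]
  | inr u => rcases u with u | u <;> cases s <;>
      simp [blockM, Matrix.mul_apply, Fintype.sum_sum_type]

lemma blockM_mul_E33 {d : ℕ} (T : Matrix (Fin d) (Fin d) ℝ) (w : Fin d → ℝ) :
    blockM T w * E33 d = 0 := by
  ext r s
  cases r with
  | inl i => cases s with
    | inl i' => simp [blockM, E33, Matrix.mul_apply, Fintype.sum_sum_type]
    | inr u => rcases u with u | u <;>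
        simp [blockM, E33, Matrix.mul_apply, Fintype.sum_sum_type]
  | inr u => rcases u with u | u <;> cases s <;>
      simp [blockM, E33, Matrix.mul_apply, Fintype.sum_sum_type]

lemma E33_mul_blockM {d : ℕ} (T : Matrix (Fin d) (Fin d) ℝ) (w : Fin d → ℝ) :
    E33 d * blockM T w = 0 := by
  ext r s
  cases r with
  | inl i => cases s <;> simp [blockM, E33, Matrix.mul_apply, Fintype.sum_sum_type]
  | inr u => rcases u with u | u <;> rcases s with s | s | s <;>
      simp [blockM, E33, Matrix.mul_apply, Fintype.sum_sum_type]

lemma blockM_add {d : ℕ} (T T' : Matrix (Fin d) (Fin d) ℝ) (w w' : Fin d → ℝ) :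
    blockM T w + blockM T' w' = blockM (T + T') (w + w') := by
  ext r s
  rcases r with i | u | u <;> rcases s with i' | u' | u' <;> simp [blockM]

lemma blockM_sum {d N : ℕ} (T : Fin N → Matrix (Fin d) (Fin d) ℝ)
    (w : Fin N → Fin d → ℝ) :
    ∑ j, blockM (T j) (w j) = blockM (∑ j, T j) (∑ j, w j) := by
  induction N with
  | zero =>
    simp only [Finset.sum_empty, Finset.univ_eq_empty]
    ext r s
    rcases r with i | u | u <;> rcases s with i' | u' | u' <;> simp [blockM]
  | succ n ih =>
    rw [Fin.sum_univ_succ, Fin.sum_univ_succ, Fin.sum_univ_succ, ih, blockM_add]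

/-- Let `J` come from a symplectic form (`Jᵀ = −J`, invertible), and let
symmetric maps `A₁,…,A_N` satisfy `JAⱼJAₖ = 0` for `j ≠ k`, with
`A = A₁ + ⋯ + A_N` invertible. Put `ξⱼ = AⱼA⁻¹ξ`. Then the matrices `E₃₃`
and `Mⱼ = [[JAⱼ, Jξⱼ, 0],[0,0,0],[0,0,0]]` pairwise commute, and
`M₁ + ⋯ + M_N` has upper-left block `JA` and upper-middle block `Jξ`. -/
theorem commuting_subalgebra_of_harmonic_oscillators (d N : ℕ)
    (J : Matrix (Fin d) (Fin d) ℝ) (hJ : Jᵀ = -J) (hJinv : IsUnit J.det)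
    (A : Fin N → Matrix (Fin d) (Fin d) ℝ) (hAsym : ∀ j, (A j)ᵀ = A j)
    (hOrth : ∀ j k, j ≠ k → J * A j * (J * A k) = 0)
    (hinv : IsUnit (∑ j, A j).det) (ξ : Fin d → ℝ) :
    (∀ j k, blockM (J * A j) (J.mulVec ((A j).mulVec ((∑ l, A l)⁻¹.mulVec ξ))) *
          blockM (J * A k) (J.mulVec ((A k).mulVec ((∑ l, A l)⁻¹.mulVec ξ))) =
        blockM (J * A k) (J.mulVec ((A k).mulVec ((∑ l, A l)⁻¹.mulVec ξ))) *
          blockM (J * A j) (J.mulVec ((A j).mulVec ((∑ l, A l)⁻¹.mulVec ξ)))) ∧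
    (∀ j, blockM (J * A j) (J.mulVec ((A j).mulVec ((∑ l, A l)⁻¹.mulVec ξ))) *
          E33 d =
        E33 d *
          blockM (J * A j) (J.mulVec ((A j).mulVec ((∑ l, A l)⁻¹.mulVec ξ)))) ∧
    (∑ j, blockM (J * A j) (J.mulVec ((A j).mulVec ((∑ l, A l)⁻¹.mulVec ξ)))) =
      blockM (J * ∑ j, A j) (J.mulVec ξ) := by
  set Ainv := (∑ l, A l)⁻¹ with hA
  have key : ∀ j k, j ≠ k →
      (J * A j).mulVec (J.mulVec ((A k).mulVec (Ainv.mulVec ξ))) = 0 := by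
    intro j k hjk
    have h0 := hOrth j k hjk
    calc (J * A j).mulVec (J.mulVec ((A k).mulVec (Ainv.mulVec ξ)))
        = (J * A j * (J * A k)).mulVec (Ainv.mulVec ξ) := by
          simp [Matrix.mulVec_mulVec, Matrix.mul_assoc]
      _ = 0 := by rw [h0, Matrix.zero_mulVec]
  refine ⟨?_, ?_, ?_⟩
  · intro j k
    rcases eq_or_ne j k with rfl | hjk
    · rfl
    · rw [blockM_mul, blockM_mul, hOrth j k hjk, hOrth k j hjk.symm,
        key j k hjk, key k j hjk.symm]
  · intro j
    rw [blockM_mul_E33, E33_mul_blockM]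
  · have hsum : ∀ v : Fin d → ℝ, (∑ j, A j) *ᵥ v = ∑ j, (A j) *ᵥ v := by
      intro v
      funext i
      simp [Matrix.mulVec, dotProduct, Matrix.sum_apply, Finset.sum_mul]
      rw [Finset.sum_comm]
    have hsum2 : ∀ v : Fin d → ℝ, J *ᵥ (∑ j, (A j) *ᵥ v) = ∑ j, J *ᵥ ((A j) *ᵥ v) := by
      intro v
      simpa only [Matrix.mulVecLin_apply] using
        map_sum J.mulVecLin (fun j => (A j) *ᵥ v) Finset.univ
    have hv : (∑ j, A j) *ᵥ (Ainv *ᵥ ξ) = ξ := by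
      rw [Matrix.mulVec_mulVec, hA, Matrix.mul_nonsing_inv _ hinv, Matrix.one_mulVec]
    have hvec : ∑ j, J *ᵥ ((A j) *ᵥ (Ainv *ᵥ ξ)) = J *ᵥ ξ := by
      rw [← hsum2, ← hsum, hv]
    rw [blockM_sum, ← Finset.mul_sum, hvec]
end

section
/- Let C ∈ S³V* with V = ℝⁿ and define the product B ↦ BC from symmetric maps B : V* → V to Lin(V ⊗ V, V) by ⟨λ, BC(u,v)⟩ = C(u,v,Bλ), and the product A ↦ AC as the alternating expression in the previous context. Then for all symmetric B, setting A = BC gives AC = 0. -/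
/-- The trilinear form with coefficients `c`. -/
def triForm {n : ℕ} (c : Fin n → Fin n → Fin n → ℝ) (u v w : Fin n → ℝ) : ℝ :=
  ∑ i, ∑ j, ∑ k, c i j k * u i * v j * w k

/-- The bilinear map `V × V → V` with components `A^i_{jk}`. -/
def biMap {n : ℕ} (A : Fin n → Fin n → Fin n → ℝ) (u v : Fin n → ℝ) :
    Fin n → ℝ :=
  fun i => ∑ j, ∑ k, A i j k * u j * v k

/-- The tableau product `AC ∈ S²V* ⊗ Λ²V*` of `A ∈ Lin(V⊗V,V)` with the
cubic (symmetric trilinear) form `C`. -/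
def tabProd {n : ℕ} (c : Fin n → Fin n → Fin n → ℝ)
    (A : Fin n → Fin n → Fin n → ℝ) (u₁ u₂ u₃ u₄ : Fin n → ℝ) : ℝ :=
  triForm c u₁ u₂ (biMap A u₃ u₄) + triForm c u₁ (biMap A u₂ u₄) u₃ +
      triForm c (biMap A u₁ u₄) u₂ u₃ - triForm c u₁ u₂ (biMap A u₄ u₃) -
      triForm c u₁ (biMap A u₂ u₃) u₄ - triForm c (biMap A u₁ u₃) u₂ u₄

/-- The product `B ↦ BC` taking a symmetric map `B : V* → V` to the element
of `Lin(V⊗V,V)` defined by `⟨λ, BC(u,v)⟩ = C(u,v,Bλ)`; in components,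
`(BC)^i_{jk} = Σₘ c_{jkm} B_{mi}`. -/
def symProd {n : ℕ} (c : Fin n → Fin n → Fin n → ℝ)
    (B : Fin n → Fin n → ℝ) : Fin n → Fin n → Fin n → ℝ :=
  fun i j k => ∑ m, c j k m * B m i

/-- The quadratic coefficient `Q u v k = Σᵢⱼ c i j k u i v j`. -/
def quadC {n : ℕ} (c : Fin n → Fin n → Fin n → ℝ) (u v : Fin n → ℝ)
    (k : Fin n) : ℝ :=
  ∑ i, ∑ j, c i j k * u i * v j

lemma triForm_eq_sum_quadC {n : ℕ} (c : Fin n → Fin n → Fin n → ℝ)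
    (u v w : Fin n → ℝ) : triForm c u v w = ∑ k, quadC c u v k * w k := by
  unfold triForm quadC
  simp only [Finset.sum_mul]
  exact (Finset.sum_congr rfl fun i _ => Finset.sum_comm).trans Finset.sum_comm

lemma biMap_symProd_eq {n : ℕ} (c : Fin n → Fin n → Fin n → ℝ)
    (B : Fin n → Fin n → ℝ) (u v : Fin n → ℝ) (k : Fin n) :
    biMap (symProd c B) u v k = ∑ m, B m k * quadC c u v m := by
  unfold biMap symProd quadC
  simp only [Finset.sum_mul, Finset.mul_sum]
  refine ((Finset.sum_congr rfl fun j _ => Finset.sum_comm).trans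
    Finset.sum_comm).trans ?_
  exact Finset.sum_congr rfl fun m _ => Finset.sum_congr rfl fun i _ =>
    Finset.sum_congr rfl fun j _ => by ring

/-- The key quantity: each term of the tableau product is of this form. -/
lemma key {n : ℕ} (c : Fin n → Fin n → Fin n → ℝ) (B : Fin n → Fin n → ℝ)
    (x y z w : Fin n → ℝ) :
    triForm c x y (biMap (symProd c B) z w)
      = ∑ k, ∑ m, quadC c x y k * B m k * quadC c z w m := by
  rw [triForm_eq_sum_quadC]
  refine Finset.sum_congr rfl fun k _ => ?_
  rw [biMap_symProd_eq, Finset.mul_sum]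
  exact Finset.sum_congr rfl fun m _ => by ring

/-- The key quantity is symmetric under swapping the two pairs. -/
lemma key_swap {n : ℕ} (c : Fin n → Fin n → Fin n → ℝ)
    (B : Fin n → Fin n → ℝ) (hB : ∀ i j, B i j = B j i)
    (x y z w : Fin n → ℝ) :
    triForm c x y (biMap (symProd c B) z w)
      = triForm c z w (biMap (symProd c B) x y) := by
  rw [key, key, Finset.sum_comm]
  exact Finset.sum_congr rfl fun m _ => Finset.sum_congr rfl fun k _ => by
    rw [hB]; ring

lemma quadC_symm {n : ℕ} (c : Fin n → Fin n → Fin n → ℝ)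
    (hc1 : ∀ i j k, c i j k = c j i k) (u v : Fin n → ℝ) (k : Fin n) :
    quadC c u v k = quadC c v u k := by
  unfold quadC
  rw [Finset.sum_comm]
  exact Finset.sum_congr rfl fun i _ => Finset.sum_congr rfl fun j _ => by
    rw [hc1]; ring

lemma triForm_swap12 {n : ℕ} (c : Fin n → Fin n → Fin n → ℝ)
    (hc1 : ∀ i j k, c i j k = c j i k) (u v w : Fin n → ℝ) :
    triForm c u v w = triForm c v u w := by
  unfold triForm
  rw [Finset.sum_comm]
  exact Finset.sum_congr rfl fun i _ => Finset.sum_congr rfl fun j _ =>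
    Finset.sum_congr rfl fun k _ => by rw [hc1]; ring

lemma triForm_swap23 {n : ℕ} (c : Fin n → Fin n → Fin n → ℝ)
    (hc2 : ∀ i j k, c i j k = c i k j) (u v w : Fin n → ℝ) :
    triForm c u v w = triForm c u w v := by
  unfold triForm
  refine Finset.sum_congr rfl fun i _ => ?_
  rw [Finset.sum_comm]
  exact Finset.sum_congr rfl fun j _ => Finset.sum_congr rfl fun k _ => by
    rw [hc2]; ring

lemma biMap_symProd_symm {n : ℕ} (c : Fin n → Fin n → Fin n → ℝ)
    (hc1 : ∀ i j k, c i j k = c j i k) (B : Fin n → Fin n → ℝ)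
    (u v : Fin n → ℝ) :
    biMap (symProd c B) u v = biMap (symProd c B) v u := by
  funext k
  rw [biMap_symProd_eq, biMap_symProd_eq]
  exact Finset.sum_congr rfl fun m _ => by rw [quadC_symm c hc1]

/-- For a symmetric trilinear `C` and symmetric `B : V* → V`, setting
`A = BC` gives `AC = 0`. -/
theorem tabProd_symProd_eq_zero (n : ℕ) (c : Fin n → Fin n → Fin n → ℝ)
    (hc1 : ∀ i j k, c i j k = c j i k) (hc2 : ∀ i j k, c i j k = c i k j)
    (B : Fin n → Fin n → ℝ) (hB : ∀ i j, B i j = B j i) :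
    ∀ u₁ u₂ u₃ u₄ : Fin n → ℝ, tabProd c (symProd c B) u₁ u₂ u₃ u₄ = 0 := by
  intro u₁ u₂ u₃ u₄
  unfold tabProd
  -- rewrite each of the six terms in the canonical form `triForm c _ _ (biMap A _ _)`
  have t2 : triForm c u₁ (biMap (symProd c B) u₂ u₄) u₃
      = triForm c u₁ u₃ (biMap (symProd c B) u₂ u₄) := triForm_swap23 c hc2 _ _ _
  have t3 : triForm c (biMap (symProd c B) u₁ u₄) u₂ u₃
      = triForm c u₂ u₃ (biMap (symProd c B) u₁ u₄) := by
    rw [triForm_swap12 c hc1, triForm_swap23 c hc2]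
  have t5 : triForm c u₁ (biMap (symProd c B) u₂ u₃) u₄
      = triForm c u₁ u₄ (biMap (symProd c B) u₂ u₃) := triForm_swap23 c hc2 _ _ _
  have t6 : triForm c (biMap (symProd c B) u₁ u₃) u₂ u₄
      = triForm c u₂ u₄ (biMap (symProd c B) u₁ u₃) := by
    rw [triForm_swap12 c hc1, triForm_swap23 c hc2]
  rw [t2, t3, t5, t6]
  rw [biMap_symProd_symm c hc1 B u₄ u₃,
    key_swap c B hB u₁ u₃ u₂ u₄, key_swap c B hB u₂ u₃ u₁ u₄]
  ring
end
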